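/- Let $A \in \mathbb{R}^{d\times d}$ be a Hurwitz matrix (every eigenvalue of $A$ has strictly negative real part). Then there exist constants $\alpha_0 > 0$, $C < \infty$ and $\varepsilon > 0$ such that for all $\alpha \in (0, \alpha_0]$ and all integers $n \ge 0$, $\|(I + \alpha A)^n - e^{n\alpha A}\|_F \le \alpha^2 n\, C\, e^{-\varepsilon \alpha n} \le (C/\varepsilon)\,\alpha$. -/

import Mathlib

open scoped BigOperators

/-- The Frobenius norm of a square real matrix. -/
noncomputable def frobNorm {d : ℕ} (M : Matrix (Fin d) (Fin d) ℝ) : ℝ :=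
  Real.sqrt (∑ i, ∑ j, (M i j) ^ 2)

/-- A real square matrix is Hurwitz if every (complex) eigenvalue has strictly
negative real part. -/
def IsHurwitz {d : ℕ} (A : Matrix (Fin d) (Fin d) ℝ) : Prop :=
  ∀ μ ∈ spectrum ℂ (A.map (algebraMap ℝ ℂ)), μ.re < 0

/-!
Complexify `A` and work in a complex Banach algebra. If the spectrum of `b` lies in
`Re z ≤ -r`, then for small `α₀` the spectrum of `P = 1 + α₀ b` lies in the disc of radius
`1 - ε α₀ < 1`, and Gelfand's formula gives `‖P ^ k‖ ≤ M (1 - ε α₀) ^ k`. For `0 ≤ α ≤ α₀`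
both `1 + α b = (1 - θ) + θ P` and `exp (u b) = e^{-u/α₀} exp ((u/α₀) P)` are affine in `P`,
which turns this single bound into `‖(1 + α b) ^ k‖, ‖exp (α b) ^ k‖ ≤ M e^{-ε α k}`
uniformly in `α`. Telescoping `X ^ n - Q ^ n = ∑ X ^ i Q ^ (n - 1 - i) (X - Q)` with
`‖X - Q‖ = O(α²)` gives the first inequality; the second is `x e^{-x} ≤ 1`.
-/

open NormedSpace Finset
open scoped Nat

theorem norm_pow_sub_pow_le_of_commute {R : Type*} [NormedRing R] {x y : R} (hxy : Commute x y)
    {M E : ℝ} (hx : ∀ k : ℕ, ‖x ^ k‖ ≤ M * E ^ k) (hy : ∀ k : ℕ, ‖y ^ k‖ ≤ M * E ^ k) (n : ℕ) :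
    ‖x ^ n - y ^ n‖ ≤ n * M ^ 2 * E ^ (n - 1) * ‖x - y‖ := by
  rw [← hxy.geom_sum₂_mul]
  refine (norm_mul_le _ _).trans (mul_le_mul_of_nonneg_right ?_ (norm_nonneg _))
  refine (norm_sum_le _ _).trans ?_
  calc ∑ i ∈ Finset.range n, ‖x ^ i * y ^ (n - 1 - i)‖
      ≤ ∑ i ∈ Finset.range n, M * E ^ i * (M * E ^ (n - 1 - i)) := by
        refine Finset.sum_le_sum fun i _ => (norm_mul_le _ _).trans ?_
        exact mul_le_mul (hx i) (hy _) (norm_nonneg _) ((norm_nonneg _).trans (hx i))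
    _ = ∑ _i ∈ Finset.range n, M ^ 2 * E ^ (n - 1) := by
        refine Finset.sum_congr rfl fun i hi => ?_
        rw [mul_mul_mul_comm, ← pow_add, ← sq,
          Nat.add_sub_cancel' (Nat.le_sub_one_of_lt (Finset.mem_range.mp hi))]
    _ = n * M ^ 2 * E ^ (n - 1) := by
        rw [Finset.sum_const, Finset.card_range, nsmul_eq_mul, mul_assoc]

section PowerBounds

variable {𝕜 A : Type*} [NormedField 𝕜] [NormedRing A] [NormedAlgebra 𝕜 A]

theorem norm_pow_algebraMap_add_smul_le {p : A} {M ρ : ℝ} (h : ∀ k : ℕ, ‖p ^ k‖ ≤ M * ρ ^ k)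
    (s t : 𝕜) (n : ℕ) :
    ‖(algebraMap 𝕜 A s + t • p) ^ n‖ ≤ M * (‖s‖ + ‖t‖ * ρ) ^ n := by
  rw [(Algebra.commute_algebraMap_left s (t • p)).add_pow, add_pow, mul_sum]
  refine (norm_sum_le _ _).trans (sum_le_sum fun k _ => ?_)
  calc ‖algebraMap 𝕜 A s ^ k * (t • p) ^ (n - k) * (n.choose k : A)‖
      = ‖n.choose k • s ^ k • t ^ (n - k) • p ^ (n - k)‖ := by
        rw [← map_pow, ← Algebra.smul_def, smul_pow, ← nsmul_eq_mul']
    _ ≤ n.choose k * (‖s‖ ^ k * (‖t‖ ^ (n - k) * (M * ρ ^ (n - k)))) := by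
        refine norm_nsmul_le.trans ?_
        rw [norm_smul, norm_smul, norm_pow, norm_pow]
        gcongr
        exact h _
    _ = M * (‖s‖ ^ k * (‖t‖ * ρ) ^ (n - k) * n.choose k) := by
        rw [mul_pow]; ring

end PowerBounds

theorem Real.hasSum_pow_div_factorial (x : ℝ) :
    HasSum (fun n : ℕ => x ^ n / n !) (Real.exp x) := by
  rw [Real.exp_eq_exp_ℝ]
  exact expSeries_div_hasSum_exp x

section RealBanachAlgebra

variable {A : Type*} [NormedRing A] [NormedAlgebra ℝ A]

theorem norm_pow_one_add_smul_le {b : A} {α₀ ε M : ℝ} (hα₀ : 0 < α₀) (hε : 0 ≤ ε)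
    (hεα₀ : ε * α₀ ≤ 1) (h : ∀ k : ℕ, ‖(1 + α₀ • b) ^ k‖ ≤ M * (1 - ε * α₀) ^ k)
    {α : ℝ} (hα : 0 ≤ α) (hαα₀ : α ≤ α₀) (k : ℕ) :
    ‖(1 + α • b) ^ k‖ ≤ M * Real.exp (-ε * α) ^ k := by
  set θ := α / α₀
  have hθ : θ * α₀ = α := div_mul_cancel₀ α hα₀.ne'
  have hθ1 : θ ≤ 1 := (div_le_one hα₀).mpr hαα₀
  have hconv : 1 + α • b = algebraMap ℝ A (1 - θ) + θ • (1 + α₀ • b) := by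
    rw [Algebra.algebraMap_eq_smul_one, smul_add, smul_smul, hθ, sub_smul, one_smul]; abel
  have hεα : ε * α ≤ 1 := (mul_le_mul_of_nonneg_left hαα₀ hε).trans hεα₀
  calc ‖(1 + α • b) ^ k‖ ≤ M * (|1 - θ| + |θ| * (1 - ε * α₀)) ^ k := by
        rw [hconv]; exact norm_pow_algebraMap_add_smul_le h _ _ k
    _ = M * (1 - ε * α) ^ k := by
        rw [abs_of_nonneg (by linarith), abs_of_nonneg (by positivity), ← hθ]; ring_nf
    _ ≤ M * Real.exp (-ε * α) ^ k := by
        have hM : 0 ≤ M := by simpa using (norm_nonneg _).trans (h 0)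
        gcongr
        have := Real.add_one_le_exp (-ε * α); linarith

variable [CompleteSpace A]

theorem exp_algebraMap_add (s : ℝ) (x : A) :
    exp (algebraMap ℝ A s + x) = Real.exp s • exp x := by
  have hball : ∀ y : A, y ∈ Metric.eball (0 : A) (expSeries ℝ A).radius := fun y => by
    simp [expSeries_radius_eq_top]
  rw [exp_add_of_commute_of_mem_ball (Algebra.commute_algebraMap_left s x) (hball _) (hball _),
    ← algebraMap_exp_comm, Algebra.smul_def, Real.exp_eq_exp_ℝ]

theorem norm_exp_smul_le {p : A} {M ρ : ℝ} (h : ∀ k : ℕ, ‖p ^ k‖ ≤ M * ρ ^ k) (t : ℝ) :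
    ‖exp (t • p)‖ ≤ M * Real.exp (|t| * ρ) := by
  refine (exp_series_hasSum_exp' (𝕂 := ℝ) (t • p)).norm_le_of_bounded
    ((Real.hasSum_pow_div_factorial _).mul_left M) fun n => ?_
  rw [smul_pow, norm_smul, norm_smul, norm_inv, Real.norm_natCast, norm_pow, Real.norm_eq_abs,
    mul_pow]
  calc (n ! : ℝ)⁻¹ * (|t| ^ n * ‖p ^ n‖) ≤ (n ! : ℝ)⁻¹ * (|t| ^ n * (M * ρ ^ n)) := by
        gcongr; exact h n
    _ = M * (|t| ^ n * ρ ^ n / n !) := by ring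

theorem norm_exp_sub_one_sub_le (x : A) : ‖exp x - 1 - x‖ ≤ ‖x‖ ^ 2 * Real.exp ‖x‖ := by
  have htail := (hasSum_nat_add_iff' 2).mpr (exp_series_hasSum_exp' (𝕂 := ℝ) x)
  simp only [Finset.sum_range_succ, Finset.sum_range_zero, pow_zero, pow_one, Nat.factorial_zero,
    Nat.factorial_one, Nat.cast_one, inv_one, one_smul, zero_add, ← sub_sub] at htail
  refine htail.norm_le_of_bounded ((Real.hasSum_pow_div_factorial _).mul_left _) fun n => ?_
  rw [norm_smul, norm_inv, Real.norm_natCast]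
  calc ((n + 2)! : ℝ)⁻¹ * ‖x ^ (n + 2)‖ ≤ (n ! : ℝ)⁻¹ * ‖x‖ ^ (n + 2) := by
        gcongr
        · exact Nat.le_add_right n 2
        · exact norm_pow_le' x (Nat.succ_pos _)
    _ = ‖x‖ ^ 2 * (‖x‖ ^ n / n !) := by ring

theorem norm_exp_smul_le_of_pow_one_add_smul_le {b : A} {α₀ ε M : ℝ} (hα₀ : 0 < α₀)
    (h : ∀ k : ℕ, ‖(1 + α₀ • b) ^ k‖ ≤ M * (1 - ε * α₀) ^ k) {u : ℝ} (hu : 0 ≤ u) :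
    ‖exp (u • b)‖ ≤ M * Real.exp (-ε * u) := by
  set θ := u / α₀
  have hθ : θ * α₀ = u := div_mul_cancel₀ u hα₀.ne'
  have hsplit : u • b = algebraMap ℝ A (-θ) + θ • (1 + α₀ • b) := by
    rw [Algebra.algebraMap_eq_smul_one, smul_add, smul_smul, hθ, neg_smul]; abel
  calc ‖exp (u • b)‖ ≤ Real.exp (-θ) * (M * Real.exp (|θ| * (1 - ε * α₀))) := by
        rw [hsplit, exp_algebraMap_add, norm_smul, Real.norm_of_nonneg (Real.exp_pos _).le]
        gcongr
        exact norm_exp_smul_le h θ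
    _ = M * Real.exp (-ε * u) := by
        rw [abs_of_nonneg (by positivity), mul_left_comm, ← Real.exp_add, ← hθ]; ring_nf

theorem norm_one_add_smul_pow_sub_exp_le {b : A} {α₀ ε M : ℝ} (hα₀ : 0 < α₀) (hε : 0 ≤ ε)
    (hεα₀ : ε * α₀ ≤ 1) (h : ∀ k : ℕ, ‖(1 + α₀ • b) ^ k‖ ≤ M * (1 - ε * α₀) ^ k)
    {α : ℝ} (hα : 0 ≤ α) (hαα₀ : α ≤ α₀) (n : ℕ) :
    ‖(1 + α • b) ^ n - exp ((n * α) • b)‖ ≤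
      α ^ 2 * n * (M ^ 2 * ‖b‖ ^ 2 * Real.exp (α₀ * ‖b‖ + ε * α₀)) * Real.exp (-ε * α * n) := by
  -- `exp_nsmul` is stated for normed `ℚ`-algebras.
  let : NormedAlgebra ℚ A := NormedAlgebra.restrictScalars ℚ ℝ A
  set E := Real.exp (-ε * α)
  have hEuler : ∀ k : ℕ, ‖(1 + α • b) ^ k‖ ≤ M * E ^ k :=
    norm_pow_one_add_smul_le hα₀ hε hεα₀ h hα hαα₀
  have hExp : ∀ k : ℕ, ‖exp (α • b) ^ k‖ ≤ M * E ^ k := fun k => by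
    rw [← exp_nsmul, ← Nat.cast_smul_eq_nsmul ℝ, smul_smul, ← Real.exp_nat_mul]
    convert norm_exp_smul_le_of_pow_one_add_smul_le hα₀ h (by positivity : 0 ≤ (k : ℝ) * α) using 3
    ring
  have hstep : ‖(1 + α • b) - exp (α • b)‖ ≤ α ^ 2 * (‖b‖ ^ 2 * Real.exp (α₀ * ‖b‖)) := by
    rw [← norm_neg, neg_sub, ← sub_sub]
    refine (norm_exp_sub_one_sub_le _).trans ?_
    rw [norm_smul, Real.norm_of_nonneg hα, mul_pow, mul_assoc]
    gcongr
  have hpow : E ^ (n - 1) ≤ Real.exp (ε * α₀) * Real.exp (-ε * α * n) := by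
    rw [← Real.exp_nat_mul, ← Real.exp_add]
    gcongr
    rcases n with _ | m
    · simpa using mul_nonneg hε hα₀.le
    · push_cast
      nlinarith [mul_le_mul_of_nonneg_left hαα₀ hε]
  have hcomm : Commute (1 + α • b) (exp (α • b)) :=
    ((Commute.one_left _).add_left (Commute.refl _)).exp_right
  rw [mul_smul, Nat.cast_smul_eq_nsmul, exp_nsmul]
  calc _ ≤ n * M ^ 2 * E ^ (n - 1) * ‖(1 + α • b) - exp (α • b)‖ :=
        norm_pow_sub_pow_le_of_commute hcomm hEuler hExp n
    _ ≤ n * M ^ 2 * (Real.exp (ε * α₀) * Real.exp (-ε * α * n)) *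
        (α ^ 2 * (‖b‖ ^ 2 * Real.exp (α₀ * ‖b‖))) := by gcongr
    _ = _ := by rw [Real.exp_add]; ring

end RealBanachAlgebra

theorem IsCompact.exists_pos_forall_re_le_neg {K : Set ℂ} (hK : IsCompact K)
    (h : ∀ z ∈ K, z.re < 0) : ∃ r > 0, ∀ z ∈ K, z.re ≤ -r := by
  rcases K.eq_empty_or_nonempty with rfl | hne
  · exact ⟨1, one_pos, by simp⟩
  obtain ⟨z₀, hz₀, hmax⟩ := hK.exists_isMaxOn hne Complex.continuous_re.continuousOn
  exact ⟨-z₀.re, by linarith [h z₀ hz₀], fun z hz => by linarith [isMaxOn_iff.mp hmax z hz]⟩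

theorem norm_one_add_mul_lt_of_re_le {μ : ℂ} {a r R : ℝ} (ha : 0 < a) (hr : 0 < r)
    (hre : μ.re ≤ -r) (hμ : ‖μ‖ ≤ R) (haR : a * R ^ 2 ≤ r / 2) (har : a * r ≤ 2) :
    ‖1 + a * μ‖ < 1 - a * r / 2 := by
  have hsq : ∀ w : ℂ, ‖w‖ ^ 2 = w.re ^ 2 + w.im ^ 2 := fun w => by
    rw [Complex.sq_norm, Complex.normSq_apply]; ring
  have hμR : ‖μ‖ ^ 2 ≤ R ^ 2 := pow_le_pow_left₀ (norm_nonneg μ) hμ 2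
  have hexpand : ‖1 + a * μ‖ ^ 2 = 1 + 2 * a * μ.re + a ^ 2 * ‖μ‖ ^ 2 := by
    rw [hsq, hsq]; simp; ring
  refine lt_of_pow_lt_pow_left₀ 2 (by linarith) ?_
  rw [hexpand]
  nlinarith [mul_le_mul_of_nonneg_left hμR (sq_nonneg a), mul_pos ha hr]

section ComplexBanachAlgebra

variable {A : Type*} [NormedRing A] [NormedAlgebra ℂ A] [CompleteSpace A]

theorem spectrum.exists_norm_pow_le_mul_pow [Nontrivial A] (a : A) {ρ : ℝ}
    (h : ∀ z ∈ spectrum ℂ a, ‖z‖ < ρ) : ∃ M, ∀ k : ℕ, ‖a ^ k‖ ≤ M * ρ ^ k := by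
  obtain ⟨z, hz⟩ := spectrum.nonempty a
  have hρ : 0 < ρ := (norm_nonneg z).trans_lt (h z hz)
  have hrad : spectralRadius ℂ a < ENNReal.ofReal ρ :=
    spectrum.spectralRadius_lt_of_forall_lt a fun z hz => by
      rw [← NNReal.coe_lt_coe, coe_nnnorm, Real.coe_toNNReal _ hρ.le]; exact h z hz
  have hgelfand := spectrum.pow_norm_pow_one_div_tendsto_nhds_spectralRadius a
  have hev : ∀ᶠ k : ℕ in Filter.atTop, ‖a ^ k‖ / ρ ^ k ≤ 1 := by
    filter_upwards [hgelfand.eventually_lt_const hrad, Filter.eventually_gt_atTop 0]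
      with k hk hk0
    rw [ENNReal.ofReal_lt_ofReal_iff hρ, one_div,
      Real.rpow_inv_lt_iff_of_pos (norm_nonneg _) hρ.le (by positivity), Real.rpow_natCast] at hk
    rw [div_le_one (by positivity)]; exact hk.le
  obtain ⟨M, hM⟩ := (Filter.isBoundedUnder_of_eventually_le hev).bddAbove_range
  exact ⟨M, fun k => (div_le_iff₀ (pow_pos hρ k)).mp (hM ⟨k, rfl⟩)⟩

theorem spectrum.exists_eq_one_add_mul_of_mem [Nontrivial A] {b : A} {t z : ℂ}
    (hz : z ∈ spectrum ℂ (1 + t • b)) : ∃ μ ∈ spectrum ℂ b, z = 1 + t * μ := by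
  have haeval : (1 : A) + t • b =
      Polynomial.aeval b (Polynomial.C 1 + Polynomial.C t * Polynomial.X) := by
    simp [Algebra.smul_def]
  rw [haeval, spectrum.map_polynomial_aeval] at hz
  obtain ⟨μ, hμ, rfl⟩ := hz
  exact ⟨μ, hμ, by simp⟩

theorem exists_norm_pow_one_add_smul_le (b : A) (hb : ∀ μ ∈ spectrum ℂ b, μ.re < 0) :
    ∃ α₀ ε M : ℝ, 0 < α₀ ∧ 0 < ε ∧ ε * α₀ ≤ 1 ∧
      ∀ k : ℕ, ‖(1 + α₀ • b) ^ k‖ ≤ M * (1 - ε * α₀) ^ k := by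
  cases subsingleton_or_nontrivial A
  · exact ⟨1, 1, 0, one_pos, one_pos, by norm_num, fun k => by simp [Subsingleton.elim _ (0 : A)]⟩
  obtain ⟨r, hr, hre⟩ := (spectrum.isCompact b).exists_pos_forall_re_le_neg hb
  obtain ⟨R₀, hR₀, hR₀b⟩ := (spectrum.isCompact (𝕜 := ℂ) b).isBounded.exists_pos_norm_le
  set R := R₀ + r
  set α₀ := r / (2 * R ^ 2)
  have hR : 0 < R := by positivity
  have hα₀ : 0 < α₀ := by positivity
  have hα₀R : α₀ * R ^ 2 = r / 2 := by simp only [α₀]; field_simp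
  have hα₀r : α₀ * r ≤ 1 / 2 := by
    nlinarith [mul_le_mul_of_nonneg_left (show r ≤ R by linarith) hα₀.le]
  obtain ⟨M, hM⟩ := spectrum.exists_norm_pow_le_mul_pow (1 + α₀ • b) (ρ := 1 - α₀ * r / 2)
    fun z hz => by
      rw [← Complex.coe_smul] at hz
      obtain ⟨μ, hμ, rfl⟩ := spectrum.exists_eq_one_add_mul_of_mem hz
      exact norm_one_add_mul_lt_of_re_le hα₀ hr (hre μ hμ) ((hR₀b μ hμ).trans (by linarith))
        hα₀R.le (by linarith)
  refine ⟨α₀, r / 2, M, hα₀, by positivity, by linarith, fun k => ?_⟩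
  convert hM k using 3; ring

theorem exists_norm_one_add_smul_pow_sub_exp_le (b : A) (hb : ∀ μ ∈ spectrum ℂ b, μ.re < 0) :
    ∃ α₀ ε C : ℝ, 0 < α₀ ∧ 0 < ε ∧ 0 ≤ C ∧ ∀ α ∈ Set.Ioc 0 α₀, ∀ n : ℕ,
      ‖(1 + α • b) ^ n - exp ((n * α) • b)‖ ≤ α ^ 2 * n * C * Real.exp (-ε * α * n) := by
  obtain ⟨α₀, ε, M, hα₀, hε, hεα₀, hM⟩ := exists_norm_pow_one_add_smul_le b hb
  exact ⟨α₀, ε, _, hα₀, hε, by positivity,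
    fun α hα n => norm_one_add_smul_pow_sub_exp_le hα₀ hε.le hεα₀ hM hα.1.le hα.2 n⟩

end ComplexBanachAlgebra

theorem sq_mul_mul_exp_neg_le {α t C ε : ℝ} (hα : 0 ≤ α) (hC : 0 ≤ C) (hε : 0 < ε) :
    α ^ 2 * t * C * Real.exp (-ε * α * t) ≤ C / ε * α := by
  have h := Real.mul_exp_neg_le_exp_neg_one (ε * α * t)
  have h1 : Real.exp (-1) ≤ 1 := Real.exp_le_one_iff.mpr (by norm_num)
  calc α ^ 2 * t * C * Real.exp (-ε * α * t)
      = C / ε * α * (ε * α * t * Real.exp (-(ε * α * t))) := by field_simp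
    _ ≤ C / ε * α * 1 := by gcongr; exact h.trans h1
    _ = C / ε * α := mul_one _

open scoped Matrix.Norms.Frobenius

theorem frobNorm_eq_norm {d : ℕ} (M : Matrix (Fin d) (Fin d) ℝ) : frobNorm M = ‖M‖ := by
  rw [frobNorm, Matrix.frobenius_norm_def, Real.sqrt_eq_rpow]
  simp only [Real.norm_eq_abs, Real.rpow_two, sq_abs]

/-- If `A` is Hurwitz then there exist `α₀ > 0`, `C < ∞`, `ε > 0` such that for all
`α ∈ (0, α₀]` and `n ≥ 0`,
`‖(I + α A)^n - e^{n α A}‖_F ≤ α² n C e^{-ε α n} ≤ (C/ε) α`. -/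
theorem euler_vs_exp_hurwitz_bound {d : ℕ} (A : Matrix (Fin d) (Fin d) ℝ)
    (hA : IsHurwitz A) :
    ∃ α₀ C ε : ℝ, 0 < α₀ ∧ 0 < ε ∧
      ∀ α : ℝ, α ∈ Set.Ioc 0 α₀ → ∀ n : ℕ,
        frobNorm ((1 + α • A) ^ n - NormedSpace.exp ((n * α) • A)) ≤
            α ^ 2 * n * C * Real.exp (-ε * α * n) ∧
          α ^ 2 * n * C * Real.exp (-ε * α * n) ≤ (C / ε) * α := by
  obtain ⟨α₀, ε, C, hα₀, hε, hC, hbound⟩ :=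
    exists_norm_one_add_smul_pow_sub_exp_le (A.map (algebraMap ℝ ℂ)) hA
  refine ⟨α₀, C, ε, hα₀, hε, fun α hα n => ⟨?_, sq_mul_mul_exp_neg_le hα.1.le hC hε⟩⟩
  let Φ := (Algebra.ofId ℝ ℂ).mapMatrix (m := Fin d)
  have hΦ : Continuous Φ := continuous_id.matrix_map (continuous_algebraMap ℝ ℂ)
  rw [frobNorm_eq_norm, ← Matrix.frobenius_norm_map_eq _ (algebraMap ℝ ℂ) (by simp)]
  have hmap : ((1 + α • A) ^ n - exp ((n * α) • A)).map (algebraMap ℝ ℂ) =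
      (1 + α • A.map (algebraMap ℝ ℂ)) ^ n - exp ((n * α) • A.map (algebraMap ℝ ℂ)) := by
    change Φ _ = _
    rw [map_sub, map_pow, map_add, map_one, map_smul]
    congr 1
    exact (map_exp Φ hΦ _).trans (congrArg exp (map_smul Φ _ A))
  rw [hmap]
  exact hbound α hα n
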